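/- Let ℓ : {0,...,N−1} → R≥0, ν ∈ N with 1 ≤ ν, and γ > 0, and suppose that for every p with ν ≤ p ≤ N−1, Σ_{k=p}^{N−1} ℓ(k) ≤ γ Σ_{k=p−ν}^{p−1} ℓ(k). Then with N_ν := ⌊(N−ν)/ν⌋, Σ_{k=ν N_ν}^{N−1} ℓ(k) ≤ (γ/(γ+1))^{N_ν} Σ_{k=0}^{N−1} ℓ(k). -/
import Mathlib


/-- Exponential tail decay: if for every `p` with `ν ≤ p ≤ N-1` the tail of the
cost sum is bounded by `γ` times the preceding `ν` terms, then with
`N_ν = ⌊(N-ν)/ν⌋` the tail over `{νN_ν,…,N-1}` decays geometrically with rate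
`γ/(γ+1)`. -/
theorem exponential_tail_decay (N ν : ℕ) (hν : 1 ≤ ν) (ℓ : ℕ → ℝ)
    (hℓ : ∀ k, 0 ≤ ℓ k) (γ : ℝ) (hγ : 0 < γ)
    (htail : ∀ p, ν ≤ p → p ≤ N - 1 →
      ∑ k ∈ Finset.Ico p N, ℓ k ≤ γ * ∑ k ∈ Finset.Ico (p - ν) p, ℓ k) :
    ∑ k ∈ Finset.Ico (ν * ((N - ν) / ν)) N, ℓ k ≤
      (γ / (γ + 1)) ^ ((N - ν) / ν) * ∑ k ∈ Finset.range N, ℓ k := by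
  set r := γ / (γ + 1) with hr
  have hγ1 : (0:ℝ) < γ + 1 := by linarith
  have hr0 : 0 ≤ r := by positivity
  set T : ℕ → ℝ := fun p => ∑ k ∈ Finset.Ico p N, ℓ k with hT
  have hTnn : ∀ p, 0 ≤ T p := fun p => Finset.sum_nonneg fun k _ => hℓ k
  have step : ∀ p, ν ≤ p → p ≤ N - 1 → T p ≤ r * T (p - ν) := by
    intro p hp1 hp2
    have hpN : p ≤ N := le_trans hp2 (Nat.sub_le N 1)
    have hsplit : T (p - ν) = (∑ k ∈ Finset.Ico (p - ν) p, ℓ k) + T p := by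
      rw [hT]
      exact (Finset.sum_Ico_consecutive _ (Nat.sub_le p ν) hpN).symm
    have h1 := htail p hp1 hp2
    have h2 : (γ + 1) * T p ≤ γ * T (p - ν) := by
      rw [hsplit]; nlinarith [hTnn p]
    rw [hr, div_mul_eq_mul_div, le_div_iff₀ hγ1, mul_comm (T p)]
    linarith
  have main : ∀ j, j ≤ (N - ν) / ν → T (ν * j) ≤ r ^ j * T 0 := by
    intro j
    induction j with
    | zero => intro _; simp
    | succ j ih =>
      intro hj
      have hj' : j ≤ (N - ν) / ν := Nat.le_of_succ_le hj
      have h1 : ν * (j + 1) ≤ N - ν := by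
        calc ν * (j + 1) ≤ ν * ((N - ν) / ν) := Nat.mul_le_mul_left _ hj
          _ ≤ N - ν := Nat.mul_div_le _ _
      have h2 : N - ν ≤ N - 1 := Nat.sub_le_sub_left hν N
      have h3 : ν ≤ ν * (j + 1) := by
        calc ν = ν * 1 := (mul_one ν).symm
          _ ≤ ν * (j + 1) := Nat.mul_le_mul_left _ (by omega)
      have h4 : ν * (j + 1) - ν = ν * j := by rw [Nat.mul_succ]; omega
      have hstep := step (ν * (j + 1)) h3 (le_trans h1 h2)
      rw [h4] at hstep
      calc T (ν * (j + 1)) ≤ r * T (ν * j) := hstep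
        _ ≤ r * (r ^ j * T 0) := mul_le_mul_of_nonneg_left (ih hj') hr0
        _ = r ^ (j + 1) * T 0 := by ring
  have := main ((N - ν) / ν) le_rfl
  rw [Finset.range_eq_Ico]
  exact this
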